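/- Lookback filtering soundness: fix a lookback bound B. Suppose the IndexTable stores only event-pairs (ev_x, ev_y) with ev_y.ts − ev_x.ts ≤ B, generated by the greedy nearest-successor rule restricted to gaps ≤ B. Then for any query with a 'within v' constraint where v ≤ B, a trace contains a constraint-satisfying pair of types (a_1, a_2) if and only if it contains one recoverable from the stored (a_1,a_2) pairs together with the stored (a_1,a_1) pairs; i.e., the lookback restriction causes no false negatives for within-constraints with v ≤ B. -/

import Mathlib

structure Event where
  type : ℕ
  ts : ℤ
deriving DecidableEq

/-- Greedy nearest-successor pair extraction restricted to gaps `≤ B`: each event of the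
first list is paired with the earliest unused event of the second list strictly after it,
provided the gap is at most `B`. -/
def greedyE (B : ℤ) : List Event → List Event → List (Event × Event)
  | [], _ => []
  | x :: xs, ys =>
    match ys.dropWhile (fun y => decide (y.ts ≤ x.ts)) with
    | [] => greedyE B xs ys
    | y :: rest =>
      if y.ts - x.ts ≤ B then (x, y) :: greedyE B xs rest
      else greedyE B xs ys

/-!
Every `a1`-event is an endpoint of a consecutive `(a1,a1)` pair, unless it is the only
`a1`-event, and then it is the first event of every greedy pair. So it suffices to find a greedy
pair whose `a2`-event lies within `v` after *some* `a1`-event, not necessarily its partner.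
Scan the `a1`-events in time order. If the greedy partner `y` of the current event `x` is within
`v` of `x`, we are done. Otherwise a witness pair `(x₀, y₀)` has `x₀` strictly after `x`, and
`y₀` remains available to the later `a1`-events, unless `y₀ = y` was paired with `x`: then
the stored pair `(x, y)` serves, measured from `x₀` instead of `x`.
-/

theorem List.mem_dropWhile_of_not {α : Type*} {p : α → Bool} {l : List α} {z : α}
    (hz : z ∈ l) (hpz : p z = false) : z ∈ l.dropWhile p := by
  rw [← List.takeWhile_append_dropWhile (p := p) (l := l)] at hz
  rcases List.mem_append.mp hz with hz | hz
  · simp [List.mem_takeWhile_imp hz] at hpz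
  · exact hz

theorem List.eq_singleton_or_exists_mem_zip_tail {α : Type*} :
    ∀ {l : List α} {x : α}, x ∈ l → l = [x] ∨ ∃ p ∈ l.zip l.tail, p.1 = x ∨ p.2 = x
  | [_], _, hx => .inl (by rw [List.mem_singleton.mp hx])
  | a :: b :: r, x, hx => by
    refine .inr ?_
    rcases List.mem_cons.mp hx with rfl | hx
    · exact ⟨(x, b), by simp, .inl rfl⟩
    rcases List.eq_singleton_or_exists_mem_zip_tail hx with h | ⟨p, hp, hpx⟩
    · exact ⟨(a, b), by simp, .inr (List.cons_eq_cons.mp h).1⟩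
    · exact ⟨p, List.mem_cons_of_mem _ hp, hpx⟩

theorem mem_of_mem_greedyE {B : ℤ} {xs ys : List Event} {p : Event × Event}
    (hp : p ∈ greedyE B xs ys) : p.1 ∈ xs ∧ p.2 ∈ ys := by
  induction xs generalizing ys with
  | nil => simp [greedyE] at hp
  | cons x xs ih =>
    rw [greedyE] at hp
    split at hp
    · exact (ih hp).imp_left (List.mem_cons_of_mem x)
    · next y rest hdrop =>
      have hsub : y :: rest ⊆ ys := hdrop ▸ (List.dropWhile_suffix _).subset
      split_ifs at hp
      · rcases List.mem_cons.mp hp with rfl | hp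
        · exact ⟨List.mem_cons_self, hsub List.mem_cons_self⟩
        · exact ⟨List.mem_cons_of_mem x (ih hp).1, hsub (List.mem_cons_of_mem y (ih hp).2)⟩
      · exact (ih hp).imp_left (List.mem_cons_of_mem x)

theorem exists_dropWhile_eq_cons {ys : List Event} (hys : ys.Pairwise (·.ts < ·.ts))
    {x y₀ : Event} (hy₀ : y₀ ∈ ys) (hxy₀ : x.ts < y₀.ts) :
    ∃ y rest, ys.dropWhile (fun y => decide (y.ts ≤ x.ts)) = y :: rest ∧
      x.ts < y.ts ∧ rest.Pairwise (·.ts < ·.ts) ∧ (y₀ = y ∨ y₀ ∈ rest ∧ y.ts < y₀.ts) := by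
  have hmem : y₀ ∈ ys.dropWhile (fun y => decide (y.ts ≤ x.ts)) :=
    List.mem_dropWhile_of_not hy₀ (by simpa using hxy₀)
  obtain ⟨y, rest, hdrop⟩ := List.exists_cons_of_ne_nil (List.ne_nil_of_mem hmem)
  have hhead := List.head_dropWhile_not (fun y => decide (y.ts ≤ x.ts)) (l := ys)
    (List.ne_nil_of_mem hmem)
  simp only [hdrop, List.head_cons, decide_eq_false_iff_not, not_le] at hhead
  have hsorted : (y :: rest).Pairwise (·.ts < ·.ts) :=
    hys.sublist (hdrop ▸ (List.dropWhile_suffix _).sublist)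
  refine ⟨y, rest, hdrop, hhead, (List.pairwise_cons.mp hsorted).2, ?_⟩
  rw [hdrop] at hmem
  exact (List.mem_cons.mp hmem).imp_right fun h => ⟨h, (List.pairwise_cons.mp hsorted).1 _ h⟩

theorem exists_mem_greedyE_snd_within {B v : ℤ} (hvB : v ≤ B) {xs ys : List Event}
    (hxs : xs.Pairwise (·.ts < ·.ts)) (hys : ys.Pairwise (·.ts < ·.ts))
    (h : ∃ x₀ ∈ xs, ∃ y₀ ∈ ys, 0 < y₀.ts - x₀.ts ∧ y₀.ts - x₀.ts ≤ v) :
    ∃ p ∈ greedyE B xs ys, ∃ x ∈ xs, 0 < p.2.ts - x.ts ∧ p.2.ts - x.ts ≤ v := by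
  induction xs generalizing ys with
  | nil => simp at h
  | cons x xs ih =>
    obtain ⟨hx_min, hxs⟩ := List.pairwise_cons.mp hxs
    obtain ⟨x₀, hx₀, y₀, hy₀, hpos, hle⟩ := h
    have hxx₀ : x.ts ≤ x₀.ts := by
      rcases List.mem_cons.mp hx₀ with rfl | hx₀
      exacts [le_rfl, (hx_min x₀ hx₀).le]
    obtain ⟨y, rest, hdrop, hxy, hrest, hy₀_rest⟩ :=
      exists_dropWhile_eq_cons hys hy₀ (x := x) (by omega)
    have hyy₀ : y.ts ≤ y₀.ts := by rcases hy₀_rest with rfl | ⟨_, h⟩ <;> omega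
    rw [greedyE, hdrop]
    dsimp only
    by_cases hyv : y.ts - x.ts ≤ v
    · exact ⟨(x, y), by simp [hyv.trans hvB], x, List.mem_cons_self, sub_pos.mpr hxy, hyv⟩
    -- `x`'s own partner is too late, so the witness `x₀` lies further on.
    have hx₀ : x₀ ∈ xs := by
      rcases List.mem_cons.mp hx₀ with rfl | hx₀
      · exact absurd hyv (by omega)
      · exact hx₀
    have of_tail {zs : List Event} :
        (∃ p ∈ greedyE B xs zs, ∃ x' ∈ xs, 0 < p.2.ts - x'.ts ∧ p.2.ts - x'.ts ≤ v) →
          ∃ p ∈ greedyE B xs zs, ∃ x' ∈ x :: xs, 0 < p.2.ts - x'.ts ∧ p.2.ts - x'.ts ≤ v :=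
      fun ⟨p, hp, x', hx', h⟩ => ⟨p, hp, x', List.mem_cons_of_mem x hx', h⟩
    split_ifs with hyB
    · rcases hy₀_rest with rfl | ⟨hy₀, -⟩
      · exact ⟨(x, y₀), List.mem_cons_self, x₀, List.mem_cons_of_mem x hx₀, hpos, hle⟩
      · obtain ⟨p, hp, h⟩ := of_tail (ih hxs hrest ⟨x₀, hx₀, y₀, hy₀, hpos, hle⟩)
        exact ⟨p, List.mem_cons_of_mem _ hp, h⟩
    · exact of_tail (ih hxs hys ⟨x₀, hx₀, y₀, hy₀, hpos, hle⟩)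

theorem stmt16_general (t : List Event) (ht : t.Chain' (fun e1 e2 => e1.ts < e2.ts))
    (a1 a2 : ℕ) (B v : ℤ) (hvB : v ≤ B)
    (stored12 stored11 : List (Event × Event))
    (h12 : stored12 = greedyE B (t.filter (fun ev => decide (ev.type = a1)))
                                (t.filter (fun ev => decide (ev.type = a2))))
    (h11 : stored11 = (t.filter (fun ev => decide (ev.type = a1))).zip
                      (t.filter (fun ev => decide (ev.type = a1))).tail) :
    ((∃ ex ∈ t, ∃ ey ∈ t, ex.type = a1 ∧ ey.type = a2 ∧
        0 < ey.ts - ex.ts ∧ ey.ts - ex.ts ≤ v) ↔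
     (∃ ex ∈ t, ∃ ey ∈ t,
        ((∃ p ∈ stored12, p.1 = ex ∨ p.2 = ex) ∨ (∃ p ∈ stored11, p.1 = ex ∨ p.2 = ex)) ∧
        ((∃ p ∈ stored12, p.1 = ey ∨ p.2 = ey) ∨ (∃ p ∈ stored11, p.1 = ey ∨ p.2 = ey)) ∧
        ex.type = a1 ∧ ey.type = a2 ∧ 0 < ey.ts - ex.ts ∧ ey.ts - ex.ts ≤ v)) := by
  refine ⟨fun ⟨ex, hex, ey, hey, hex₁, hey₂, hpos, hle⟩ => ?_,
    fun ⟨ex, hex, ey, hey, _, _, h⟩ => ⟨ex, hex, ey, hey, h⟩⟩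
  have hsorted : t.Pairwise (·.ts < ·.ts) := ht.pairwise
  obtain ⟨p, hp, x, hx, hpos', hle'⟩ := exists_mem_greedyE_snd_within hvB
    (xs := t.filter (·.type = a1)) (ys := t.filter (·.type = a2))
    (hsorted.sublist List.filter_sublist) (hsorted.sublist List.filter_sublist)
    ⟨ex, List.mem_filter.mpr ⟨hex, by simpa⟩, ey, List.mem_filter.mpr ⟨hey, by simpa⟩, hpos, hle⟩
  obtain ⟨hp₁, hp₂⟩ := mem_of_mem_greedyE hp
  have hx_rec : (∃ q ∈ stored12, q.1 = x ∨ q.2 = x) ∨ (∃ q ∈ stored11, q.1 = x ∨ q.2 = x) := by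
    rcases List.eq_singleton_or_exists_mem_zip_tail hx with hxs | ⟨q, hq, hqx⟩
    · exact .inl ⟨p, h12 ▸ hp, .inl (List.mem_singleton.mp (hxs ▸ hp₁))⟩
    · exact .inr ⟨q, h11 ▸ hq, hqx⟩
  simp only [List.mem_filter, decide_eq_true_iff] at hx hp₂
  exact ⟨x, hx.1, p.2, hp₂.1, hx_rec, .inl ⟨p, h12 ▸ hp, .inr rfl⟩, hx.2, hp₂.2, hpos', hle'⟩

/-- Lookback filtering soundness: if the index stores only the greedy
`(a1,a2)` pairs with gap `≤ B` together with the consecutive `(a1,a1)` pairs (all of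
whose gaps are assumed `≤ B`), then for a `within v` constraint with `v ≤ B`, the trace
contains a constraint-satisfying pair of types `(a1,a2)` iff it contains one both of
whose events are recoverable from the stored pairs — no false negatives. -/
theorem stmt16 (t : List Event) (ht : t.Chain' (fun e1 e2 => e1.ts < e2.ts))
    (a1 a2 : ℕ) (ha : a1 ≠ a2) (B v : ℤ) (hv : 0 < v) (hvB : v ≤ B)
    (stored12 stored11 : List (Event × Event))
    (h12 : stored12 = greedyE B (t.filter (fun ev => decide (ev.type = a1)))
                                (t.filter (fun ev => decide (ev.type = a2))))
    (h11 : stored11 = (t.filter (fun ev => decide (ev.type = a1))).zip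
                      (t.filter (fun ev => decide (ev.type = a1))).tail)
    (hgaps : ∀ p ∈ stored11, p.2.ts - p.1.ts ≤ B) :
    ((∃ ex ∈ t, ∃ ey ∈ t, ex.type = a1 ∧ ey.type = a2 ∧
        0 < ey.ts - ex.ts ∧ ey.ts - ex.ts ≤ v) ↔
     (∃ ex ∈ t, ∃ ey ∈ t,
        ((∃ p ∈ stored12, p.1 = ex ∨ p.2 = ex) ∨ (∃ p ∈ stored11, p.1 = ex ∨ p.2 = ex)) ∧
        ((∃ p ∈ stored12, p.1 = ey ∨ p.2 = ey) ∨ (∃ p ∈ stored11, p.1 = ey ∨ p.2 = ey)) ∧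
        ex.type = a1 ∧ ey.type = a2 ∧ 0 < ey.ts - ex.ts ∧ ey.ts - ex.ts ≤ v)) :=
  stmt16_general t ht a1 a2 B v hvB stored12 stored11 h12 h11
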